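/- Let (P, γ, I, ⋆) be a braided ABQR (associative, binary, quadratic, nonsymmetric) operad with dim P₂ = n admitting a coherent unit action (α, β) with α ≠ β. Then there is a basis {p₁,…,p_n} of P₂ with ⋆ = Σᵢ pᵢ such that the space Λ of quadratic relations of P is contained in the subspace of P₂^{⊗2} ⊕ P₂^{⊗2} spanned by: (⋆⊗p₂, p₂⊗p₂); (p₁⊗p₁, p₁⊗⋆); (pᵢ⊗p₁, pᵢ⊗p₁) for 2≤i≤n; (p₂⊗pⱼ, p₂⊗pⱼ) for 3≤j≤n; (p₁⊗pᵢ, pᵢ⊗p₂) for 3≤i≤n; (pᵢ⊗pⱼ, 0) and (0, pᵢ⊗pⱼ) for 3≤i,j≤n. Conversely, if Λ is contained in this span, the unit action determined by α, β with α(p₁)=β(p₂)=1 on the corresponding basis elements is coherent. -/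

import Mathlib

open TensorProduct

variable (k : Type*) [Field k] [CharZero k]
variable (V : Type*) [AddCommGroup V] [Module k V]

/-- `a ⊗ b ↦ f(a) • b`. -/
noncomputable def contrL (f : V →ₗ[k] k) : V ⊗[k] V →ₗ[k] V :=
  TensorProduct.lift ((LinearMap.lsmul k V) ∘ₗ f)

/-- `a ⊗ b ↦ f(b) • a`. -/
noncomputable def contrR (f : V →ₗ[k] k) : V ⊗[k] V →ₗ[k] V :=
  TensorProduct.lift ((LinearMap.lsmul k V) ∘ₗ f).flip

/-- `a ⊗ b ↦ f(a) * g(b)`. -/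
noncomputable def contrS (f g : V →ₗ[k] k) : V ⊗[k] V →ₗ[k] k :=
  (TensorProduct.lid k k).toLinearMap ∘ₗ TensorProduct.map f g

/-- The five coherence equations (C1)–(C5) of Theorem 4.1 for a relation pair
`(Σᵢ aᵢ ⊗ bᵢ, Σⱼ cⱼ ⊗ dⱼ) ∈ P₂^{⊗2} ⊕ P₂^{⊗2}`, expressed for the unit-action
maps `α, β : P₂ → k` and the associative element `⋆ = st`:
(C1) `Σ β(aᵢ)bᵢ = Σ β(cⱼ)dⱼ`; (C2) `Σ α(aᵢ)bᵢ = Σ β(dⱼ)cⱼ`;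
(C3) `Σ α(bᵢ)aᵢ = Σ α(dⱼ)cⱼ`; (C4) `Σ β(bᵢ)aᵢ = (Σ β(cⱼ)β(dⱼ)) ⋆`;
(C5) `(Σ α(aᵢ)α(bᵢ)) ⋆ = Σ α(cⱼ)dⱼ`. -/
noncomputable def Coherent (α β : V →ₗ[k] k) (st : V)
    (x : (V ⊗[k] V) × (V ⊗[k] V)) : Prop :=
  contrL k V β x.1 = contrL k V β x.2 ∧
  contrL k V α x.1 = contrR k V β x.2 ∧
  contrR k V α x.1 = contrR k V α x.2 ∧
  contrR k V β x.1 = contrS k V β β x.2 • st ∧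
  contrS k V α α x.1 • st = contrL k V α x.2

/-- The spanning set `λ'_{n,coh}` (Eq. (4.2)) of admissible quadratic relations
for a coherent unit action with `α ≠ β`, relative to a basis `p₁,…,pₙ` of `P₂`
with `⋆ = Σᵢ pᵢ` (indices here are `0`-based: `p₁ = p 0`, `p₂ = p 1`):
`(⋆⊗p₂, p₂⊗p₂)`; `(p₁⊗p₁, p₁⊗⋆)`; `(pᵢ⊗p₁, pᵢ⊗p₁)` for `2 ≤ i ≤ n`;
`(p₂⊗pⱼ, p₂⊗pⱼ)` for `3 ≤ j ≤ n`; `(p₁⊗pᵢ, pᵢ⊗p₂)` for `3 ≤ i ≤ n`;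
`(pᵢ⊗pⱼ, 0)`, `(0, pᵢ⊗pⱼ)` for `3 ≤ i, j ≤ n`. -/
def classSetNeq {n : ℕ} (hn : 2 ≤ n) (st : V) (p : Fin n → V) :
    Set ((V ⊗[k] V) × (V ⊗[k] V)) :=
  {x | x = (st ⊗ₜ[k] p ⟨1, by omega⟩,
            p ⟨1, by omega⟩ ⊗ₜ[k] p ⟨1, by omega⟩)
    ∨ x = (p ⟨0, by omega⟩ ⊗ₜ[k] p ⟨0, by omega⟩, p ⟨0, by omega⟩ ⊗ₜ[k] st)
    ∨ (∃ i : Fin n, 1 ≤ (i : ℕ) ∧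
        x = (p i ⊗ₜ[k] p ⟨0, by omega⟩, p i ⊗ₜ[k] p ⟨0, by omega⟩))
    ∨ (∃ j : Fin n, 2 ≤ (j : ℕ) ∧
        x = (p ⟨1, by omega⟩ ⊗ₜ[k] p j, p ⟨1, by omega⟩ ⊗ₜ[k] p j))
    ∨ (∃ i : Fin n, 2 ≤ (i : ℕ) ∧
        x = (p ⟨0, by omega⟩ ⊗ₜ[k] p i, p i ⊗ₜ[k] p ⟨1, by omega⟩))
    ∨ (∃ i j : Fin n, 2 ≤ (i : ℕ) ∧ 2 ≤ (j : ℕ) ∧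
        (x = (p i ⊗ₜ[k] p j, 0) ∨ x = (0, p i ⊗ₜ[k] p j)))}

/-!
Write `W = ker α ∩ ker β`. When `α ≠ β` and `α ⋆ = β ⋆ = 1` there are `e₀ + e₁ = ⋆` with `(e₀, e₁)` dual
to `(α, β)`, and completing `e₀ - Σ wⱼ, e₁` by a basis `(wⱼ)` of `W` gives a basis summing to `⋆` whose
first two coordinate functions are `α` and `β`. In such a basis every generator of `classSetNeq`
satisfies (C1)–(C5), and coherent pairs form a subspace: this is the converse.
For the forward direction, a coherent pair `x` is corrected by an element `y` of the span so that the
contractions of `x.1 - y.1` by `α ⊗ id`, `β ⊗ id` and `id ⊗ α` vanish. As `x - y` is again coherent,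
(C1)–(C5) propagate this to all eight contractions of its two components by `α` and `β`, and a tensor
killed by all of them lies in `W ⊗ W`, which the generators `(pᵢ ⊗ pⱼ, 0)`, `(0, pᵢ ⊗ pⱼ)` span.
-/

lemma Fin.eq_zero_or_eq_one_or_exists_eq_succ_succ {m : ℕ} (i : Fin (m + 2)) :
    i = 0 ∨ i = 1 ∨ ∃ j : Fin m, i = j.succ.succ := by
  rcases Fin.eq_zero_or_eq_succ i with rfl | ⟨i, rfl⟩
  · exact Or.inl rfl
  rcases Fin.eq_zero_or_eq_succ i with rfl | ⟨j, rfl⟩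
  · exact Or.inr (Or.inl rfl)
  · exact Or.inr (Or.inr ⟨j, rfl⟩)

lemma Fin.ne_zero_and_ne_one_of_two_le {m : ℕ} {i : Fin (m + 2)} (hi : 2 ≤ (i : ℕ)) :
    i ≠ 0 ∧ i ≠ 1 := by
  constructor <;> rintro rfl <;> simp at hi

lemma Fin.two_le_val_succ_succ {m : ℕ} (j : Fin m) : 2 ≤ ((j.succ.succ : Fin (m + 2)) : ℕ) := by
  simp

section
variable {k : Type*} [Field k] {V : Type*} [AddCommGroup V] [Module k V]

@[simp] lemma contrL_tmul (f : V →ₗ[k] k) (a b : V) : contrL k V f (a ⊗ₜ b) = f a • b := rfl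

@[simp] lemma contrR_tmul (f : V →ₗ[k] k) (a b : V) : contrR k V f (a ⊗ₜ b) = f b • a := rfl

@[simp] lemma contrS_tmul (f g : V →ₗ[k] k) (a b : V) : contrS k V f g (a ⊗ₜ b) = f a * g b := rfl

lemma contrS_eq_apply_contrL (f g : V →ₗ[k] k) (z : V ⊗[k] V) :
    contrS k V f g z = g (contrL k V f z) := by
  induction z using TensorProduct.induction_on with
  | zero => simp
  | tmul a b => simp
  | add z z' hz hz' => simp [hz, hz']

noncomputable def coherentSubmodule (α β : V →ₗ[k] k) (st : V) :
    Submodule k ((V ⊗[k] V) × (V ⊗[k] V)) :=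
  LinearMap.ker (contrL k V β ∘ₗ LinearMap.fst k _ _ - contrL k V β ∘ₗ LinearMap.snd k _ _) ⊓
  LinearMap.ker (contrL k V α ∘ₗ LinearMap.fst k _ _ - contrR k V β ∘ₗ LinearMap.snd k _ _) ⊓
  LinearMap.ker (contrR k V α ∘ₗ LinearMap.fst k _ _ - contrR k V α ∘ₗ LinearMap.snd k _ _) ⊓
  LinearMap.ker (contrR k V β ∘ₗ LinearMap.fst k _ _ -
    LinearMap.toSpanSingleton k V st ∘ₗ contrS k V β β ∘ₗ LinearMap.snd k _ _) ⊓
  LinearMap.ker (LinearMap.toSpanSingleton k V st ∘ₗ contrS k V α α ∘ₗ LinearMap.fst k _ _ -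
    contrL k V α ∘ₗ LinearMap.snd k _ _)

@[simp] lemma mem_coherentSubmodule {α β : V →ₗ[k] k} {st : V} {x : (V ⊗[k] V) × (V ⊗[k] V)} :
    x ∈ coherentSubmodule α β st ↔ Coherent k V α β st x := by
  simp [Coherent, coherentSubmodule, sub_eq_zero, and_assoc]

section Basis
variable {ι : Type*} (p : Module.Basis ι k V)

lemma coord_contrL (i j : ι) (z : V ⊗[k] V) :
    p.coord j (contrL k V (p.coord i) z) = (p.tensorProduct p).repr z (i, j) := by
  induction z using TensorProduct.induction_on with
  | zero => simp
  | tmul a b => simp [Module.Basis.tensorProduct_repr_tmul_apply, mul_comm]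
  | add z z' hz hz' => simp only [map_add, Finsupp.add_apply, hz, hz']

lemma coord_contrR (i j : ι) (z : V ⊗[k] V) :
    p.coord i (contrR k V (p.coord j) z) = (p.tensorProduct p).repr z (i, j) := by
  induction z using TensorProduct.induction_on with
  | zero => simp
  | tmul a b => simp [Module.Basis.tensorProduct_repr_tmul_apply, mul_comm]
  | add z z' hz hz' => simp only [map_add, Finsupp.add_apply, hz, hz']

lemma repr_sum_self_apply [Fintype ι] (i : ι) : p.repr (∑ j, p j) i = 1 := by
  classical
  simp [Finsupp.single_apply]

end Basis

lemma linearIndependent_finCons_of_apply_eq_zero {m : ℕ} {v : Fin m → V}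
    (hv : LinearIndependent k v) (f : V →ₗ[k] k) (hf : ∀ i, f (v i) = 0) {x : V} (hx : f x ≠ 0) :
    LinearIndependent k (Fin.cons x v : Fin (m + 1) → V) := by
  refine linearIndependent_finCons.mpr ⟨hv, fun hmem => hx ?_⟩
  have hle : Submodule.span k (Set.range v) ≤ LinearMap.ker f := by
    rw [Submodule.span_le]
    rintro _ ⟨i, rfl⟩
    exact hf i
  exact hle hmem

lemma exists_dual_pair_add_eq {st : V} {α β : V →ₗ[k] k} (hα : α st = 1) (hβ : β st = 1)
    (hne : α ≠ β) :
    ∃ e₀ e₁ : V, e₀ + e₁ = st ∧ α e₀ = 1 ∧ β e₀ = 0 ∧ α e₁ = 0 ∧ β e₁ = 1 := by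
  obtain ⟨z, hz⟩ : ∃ z, α z ≠ β z := by
    by_contra! h
    exact hne (LinearMap.ext h)
  have hd : β z - α z ≠ 0 := sub_ne_zero.mpr hz.symm
  refine ⟨(β z - α z)⁻¹ • (β z • st - z), (β z - α z)⁻¹ • (z - α z • st), ?_, ?_, ?_, ?_, ?_⟩
  · rw [← smul_add, sub_add_sub_cancel, ← sub_smul, inv_smul_smul₀ hd]
  all_goals simp [hα, hβ, hd]

lemma finrank_ker_prod_add_two [FiniteDimensional k V] {α β : V →ₗ[k] k} {e₀ e₁ : V}
    (hα₀ : α e₀ = 1) (hβ₀ : β e₀ = 0) (hα₁ : α e₁ = 0) (hβ₁ : β e₁ = 1) :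
    Module.finrank k (LinearMap.ker (α.prod β)) + 2 = Module.finrank k V := by
  have hsurj : LinearMap.range (α.prod β) = ⊤ := by
    refine LinearMap.range_eq_top.mpr fun ⟨a, b⟩ => ⟨a • e₀ + b • e₁, ?_⟩
    simp [hα₀, hβ₀, hα₁, hβ₁]
  have := LinearMap.finrank_range_add_finrank_ker (α.prod β)
  rw [hsurj, finrank_top, Module.finrank_prod, Module.finrank_self] at this
  omega

lemma exists_basis_sum_eq_coord_eq [FiniteDimensional k V] {m : ℕ}
    (hdim : Module.finrank k V = m + 2) {st : V} {α β : V →ₗ[k] k} (hα : α st = 1)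
    (hβ : β st = 1) (hne : α ≠ β) :
    ∃ p : Module.Basis (Fin (m + 2)) k V, st = ∑ i, p i ∧ p.coord 0 = α ∧ p.coord 1 = β := by
  obtain ⟨e₀, e₁, he, hα₀, hβ₀, hα₁, hβ₁⟩ := exists_dual_pair_add_eq hα hβ hne
  have hW : Module.finrank k (LinearMap.ker (α.prod β)) = m := by
    have := finrank_ker_prod_add_two hα₀ hβ₀ hα₁ hβ₁
    omega
  let r := Module.finBasisOfFinrankEq k _ hW
  let v : Fin m → V := (LinearMap.ker (α.prod β)).subtype ∘ r
  have hv : LinearIndependent k v := r.linearIndependent.map' _ (Submodule.ker_subtype _)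
  have hv₀ (i : Fin m) : α.prod β (v i) = 0 := (r i).2
  have hαv (i : Fin m) : α (v i) = 0 := congrArg Prod.fst (hv₀ i)
  have hβv (i : Fin m) : β (v i) = 0 := congrArg Prod.snd (hv₀ i)
  have hαe : α (e₀ - ∑ i, v i) = 1 := by simp [hα₀, hαv]
  have hβe : β (e₀ - ∑ i, v i) = 0 := by simp [hβ₀, hβv]
  have hli : LinearIndependent k (Fin.cons (e₀ - ∑ i, v i) (Fin.cons e₁ v) : Fin (m + 2) → V) :=
    linearIndependent_finCons_of_apply_eq_zero
      (linearIndependent_finCons_of_apply_eq_zero hv β hβv (by simp [hβ₁]))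
      α (Fin.cases hα₁ hαv) (by simp [hαe])
  set p := basisOfLinearIndependentOfCardEqFinrank hli (by simp [hdim])
  have hp : ⇑p = Fin.cons (e₀ - ∑ i, v i) (Fin.cons e₁ v) :=
    coe_basisOfLinearIndependentOfCardEqFinrank _ _
  refine ⟨p, ?_, p.ext fun i => ?_, p.ext fun i => ?_⟩
  · rw [hp, Fin.sum_univ_succ, Fin.sum_univ_succ, ← he]
    simp
  all_goals
    rw [Module.Basis.coord_apply, Module.Basis.repr_self, hp]
    rcases i.eq_zero_or_eq_one_or_exists_eq_succ_succ with rfl | rfl | ⟨i, rfl⟩ <;>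
      simp [Fin.succ_succ_ne_one, hαe, hβe, hα₁, hβ₁, hαv, hβv]

section FinTwo
variable {m : ℕ} (p : Module.Basis (Fin (m + 2)) k V)

lemma coord_zero_smul_add_coord_one_smul_add_sum (v : V) :
    p.coord 0 v • p 0 + p.coord 1 v • p 1 + ∑ j : Fin m, p.coord j.succ.succ v • p j.succ.succ
      = v := by
  have h := p.sum_repr v
  rw [Fin.sum_univ_succ, Fin.sum_univ_succ] at h
  simpa [add_assoc] using h

lemma apply_mem_of_contr_eq_zero {M : Type*} [AddCommGroup M] [Module k M]
    (f : V ⊗[k] V →ₗ[k] M) (S : Submodule k M)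
    (hf : ∀ i j : Fin m, f (p i.succ.succ ⊗ₜ p j.succ.succ) ∈ S) {z : V ⊗[k] V}
    (hL₀ : contrL k V (p.coord 0) z = 0) (hL₁ : contrL k V (p.coord 1) z = 0)
    (hR₀ : contrR k V (p.coord 0) z = 0) (hR₁ : contrR k V (p.coord 1) z = 0) :
    f z ∈ S := by
  rw [← (p.tensorProduct p).sum_repr z, map_sum]
  refine Submodule.sum_mem _ fun ⟨i, j⟩ _ => ?_
  rw [map_smul, Module.Basis.tensorProduct_apply]
  rcases i.eq_zero_or_eq_one_or_exists_eq_succ_succ with rfl | rfl | ⟨i, rfl⟩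
  · simp [← coord_contrL, hL₀]
  · simp [← coord_contrL, hL₁]
  rcases j.eq_zero_or_eq_one_or_exists_eq_succ_succ with rfl | rfl | ⟨j, rfl⟩
  · simp [← coord_contrR, hR₀]
  · simp [← coord_contrR, hR₁]
  · exact S.smul_mem _ (hf i j)

lemma span_classSetNeq_le_coherentSubmodule {st : V} (hst : st = ∑ i, p i) :
    Submodule.span k (classSetNeq k V (Nat.le_add_left 2 m) st p) ≤
      coherentSubmodule (p.coord 0) (p.coord 1) st := by
  have h₀ : p.repr st 0 = 1 := hst ▸ repr_sum_self_apply p 0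
  have h₁ : p.repr st 1 = 1 := hst ▸ repr_sum_self_apply p 1
  rw [Submodule.span_le]
  rintro x (rfl | rfl | ⟨i, hi, rfl⟩ | ⟨i, hi, rfl⟩ | ⟨i, hi, rfl⟩ | ⟨i, j, hi, hj, rfl | rfl⟩)
  · simp [Coherent, h₀, h₁]
  · simp [Coherent, h₀, h₁]
  · simp [Coherent, Finsupp.single_apply, Fin.pos_iff_ne_zero.mp hi]
  all_goals obtain ⟨hi₀, hi₁⟩ := Fin.ne_zero_and_ne_one_of_two_le hi
  · simp [Coherent, hi₀, hi₁]
  · simp [Coherent, hi₀, hi₁]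
  all_goals obtain ⟨hj₀, hj₁⟩ := Fin.ne_zero_and_ne_one_of_two_le hj
  all_goals simp [Coherent, hi₀, hi₁, hj₀, hj₁]

lemma exists_mem_span_classSetNeq_contr_eq {st : V} (hst : st = ∑ i, p i) (z : V ⊗[k] V)
    (hz : (p.tensorProduct p).repr z (0, 1) = (p.tensorProduct p).repr z (1, 1)) :
    ∃ y ∈ Submodule.span k (classSetNeq k V (Nat.le_add_left 2 m) st p),
      contrL k V (p.coord 0) y.1 = contrL k V (p.coord 0) z ∧
      contrL k V (p.coord 1) y.1 = contrL k V (p.coord 1) z ∧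
      contrR k V (p.coord 0) y.1 = contrR k V (p.coord 0) z := by
  have h₀ : p.repr st 0 = 1 := hst ▸ repr_sum_self_apply p 0
  have h₁ : p.repr st 1 = 1 := hst ▸ repr_sum_self_apply p 1
  set u := contrL k V (p.coord 0) z
  set v := contrL k V (p.coord 1) z
  set w := contrR k V (p.coord 0) z
  have hu : p.coord 0 u = p.coord 0 w := by rw [coord_contrL, coord_contrR]
  have hv₀ : p.coord 0 v = p.coord 1 w := by rw [coord_contrL, coord_contrR]
  have hv₁ : p.coord 1 v = p.coord 1 u := by rw [coord_contrL, coord_contrL, hz]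
  simp only [Module.Basis.coord_apply] at hu hv₀ hv₁
  -- `hu` and `hv₀` hold for every tensor; `hv₁` is the one compatibility that needs `hz`.
  refine ⟨p.coord 0 u • (p 0 ⊗ₜ p 0, p 0 ⊗ₜ st) + p.coord 1 u • (st ⊗ₜ p 1, p 1 ⊗ₜ p 1) +
      p.coord 1 w • (p 1 ⊗ₜ p 0, p 1 ⊗ₜ p 0) +
      ∑ j : Fin m, (p.coord j.succ.succ w • (p j.succ.succ ⊗ₜ p 0, p j.succ.succ ⊗ₜ p 0) +
        p.coord j.succ.succ v • (p 1 ⊗ₜ p j.succ.succ, p 1 ⊗ₜ p j.succ.succ) +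
        p.coord j.succ.succ u • (p 0 ⊗ₜ p j.succ.succ, p j.succ.succ ⊗ₜ p 1)), ?_, ?_, ?_, ?_⟩
  · refine add_mem (add_mem (add_mem ?_ ?_) ?_) (sum_mem fun j _ => add_mem (add_mem ?_ ?_) ?_) <;>
      refine Submodule.smul_mem _ _ (Submodule.subset_span ?_)
    · exact Or.inr (Or.inl rfl)
    · exact Or.inl rfl
    · exact Or.inr (Or.inr (Or.inl ⟨1, by simp, rfl⟩))
    · exact Or.inr (Or.inr (Or.inl ⟨_, by simp, rfl⟩))
    · exact Or.inr (Or.inr (Or.inr (Or.inl ⟨_, Fin.two_le_val_succ_succ j, rfl⟩)))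
    · exact Or.inr (Or.inr (Or.inr (Or.inr (Or.inl ⟨_, Fin.two_le_val_succ_succ j, rfl⟩))))
  · refine Eq.trans ?_ (coord_zero_smul_add_coord_one_smul_add_sum p u)
    simp [Prod.fst_sum, h₀]
  · refine Eq.trans ?_ (coord_zero_smul_add_coord_one_smul_add_sum p v)
    simp [Prod.fst_sum, Fin.succ_succ_ne_one, h₁, hv₀, hv₁]
    abel
  · refine Eq.trans ?_ (coord_zero_smul_add_coord_one_smul_add_sum p w)
    simp [Prod.fst_sum, hu]

lemma mem_span_classSetNeq_of_coherent {st : V} (hst : st = ∑ i, p i)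
    {x : (V ⊗[k] V) × (V ⊗[k] V)} (hx : Coherent k V (p.coord 0) (p.coord 1) st x) :
    x ∈ Submodule.span k (classSetNeq k V (Nat.le_add_left 2 m) st p) := by
  set S := Submodule.span k (classSetNeq k V (Nat.le_add_left 2 m) st p)
  have hz : (p.tensorProduct p).repr x.1 (0, 1) = (p.tensorProduct p).repr x.1 (1, 1) := by
    -- (C4) makes `(id ⊗ β) x.1` a multiple of `st`, whose coordinates are all `1`.
    rw [← coord_contrR, ← coord_contrR, hx.2.2.2.1]
    simp [hst ▸ repr_sum_self_apply p]
  obtain ⟨y, hyS, hL₀, hL₁, hR₀⟩ := exists_mem_span_classSetNeq_contr_eq p hst x.1 hz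
  set d := x - y
  obtain ⟨hC₁, hC₂, hC₃, hC₄, hC₅⟩ : Coherent k V (p.coord 0) (p.coord 1) st d :=
    mem_coherentSubmodule.mp <|
      sub_mem (mem_coherentSubmodule.mpr hx) (span_classSetNeq_le_coherentSubmodule p hst hyS)
  have h₁L₀ : contrL k V (p.coord 0) d.1 = 0 := by simp [d, hL₀]
  have h₁L₁ : contrL k V (p.coord 1) d.1 = 0 := by simp [d, hL₁]
  have h₁R₀ : contrR k V (p.coord 0) d.1 = 0 := by simp [d, hR₀]
  have h₁R₁ : contrR k V (p.coord 1) d.1 = 0 := by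
    rw [hC₄, contrS_eq_apply_contrL, ← hC₁, h₁L₁, map_zero, zero_smul]
  have h₂L₀ : contrL k V (p.coord 0) d.2 = 0 := by
    rw [← hC₅, contrS_eq_apply_contrL, h₁L₀, map_zero, zero_smul]
  have h₂L₁ : contrL k V (p.coord 1) d.2 = 0 := hC₁ ▸ h₁L₁
  have h₂R₀ : contrR k V (p.coord 0) d.2 = 0 := hC₃ ▸ h₁R₀
  have h₂R₁ : contrR k V (p.coord 1) d.2 = 0 := hC₂ ▸ h₁L₀
  have hdS : d ∈ S := by
    have hd : d = LinearMap.inl k _ _ d.1 + LinearMap.inr k _ _ d.2 := by ext <;> simp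
    rw [hd]
    refine add_mem (apply_mem_of_contr_eq_zero p _ S (fun i j => ?_) h₁L₀ h₁L₁ h₁R₀ h₁R₁)
      (apply_mem_of_contr_eq_zero p _ S (fun i j => ?_) h₂L₀ h₂L₁ h₂R₀ h₂R₁) <;>
      refine Submodule.subset_span (Or.inr (Or.inr (Or.inr (Or.inr (Or.inr ?_)))))
    · exact ⟨_, _, Fin.two_le_val_succ_succ i, Fin.two_le_val_succ_succ j, Or.inl rfl⟩
    · exact ⟨_, _, Fin.two_le_val_succ_succ i, Fin.two_le_val_succ_succ j, Or.inr rfl⟩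
  simpa [d] using add_mem hyS hdS

end FinTwo

end

/-- classification, case `α ≠ β`. Let `(P, γ, I, ⋆)` be a
braided ABQR operad with `dim P₂ = n`; `P₂ = V` below, `Λ` its space of quadratic
relations, and coherence of a unit action `(α, β)` expressed via the five
equations (C1)–(C5) of Theorem 4.1 (predicate `Coherent`).
(⇒) If `P` admits a coherent unit action `(α, β)` with `α ≠ β`, then there is a
basis `{pᵢ}` of `P₂` with `⋆ = Σᵢ pᵢ` such that `Λ` is contained in the span of
the set `classSetNeq`. (⇐) Conversely, if `Λ` is contained in this span for some
such basis, then the unit action determined by `α = p.coord 0`, `β = p.coord 1`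
(i.e. `α(p₁) = β(p₂) = 1` and vanishing on the other basis elements) is
coherent. -/
theorem classification_coherent_ne {k : Type*} [Field k]
    {V : Type*} [AddCommGroup V] [Module k V] [FiniteDimensional k V]
    (n : ℕ) (hn : 2 ≤ n) (hdim : Module.finrank k V = n) (st : V)
    (Λ : Submodule k ((V ⊗[k] V) × (V ⊗[k] V))) :
    ((∀ α β : V →ₗ[k] k, α st = 1 → β st = 1 → α ≠ β →
        (∀ x ∈ Λ, Coherent k V α β st x) →
        ∃ p : Module.Basis (Fin n) k V, st = ∑ i, p i ∧
          Λ ≤ Submodule.span k (classSetNeq k V hn st p)) ∧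
     (∀ p : Module.Basis (Fin n) k V, st = ∑ i, p i →
        Λ ≤ Submodule.span k (classSetNeq k V hn st p) →
        ∀ x ∈ Λ,
          Coherent k V (p.coord ⟨0, by omega⟩) (p.coord ⟨1, by omega⟩) st x)) := by
  obtain ⟨m, rfl⟩ : ∃ m, n = m + 2 := ⟨n - 2, by omega⟩
  refine ⟨fun α β hα hβ hne hΛ => ?_, fun p hst hΛ x hx => ?_⟩
  · obtain ⟨p, hst, rfl, rfl⟩ := exists_basis_sum_eq_coord_eq hdim hα hβ hne
    exact ⟨p, hst, fun x hx => mem_span_classSetNeq_of_coherent p hst (hΛ x hx)⟩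
  · exact mem_coherentSubmodule.mp (span_classSetNeq_le_coherentSubmodule p hst (hΛ hx))
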